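/- Let T be a directed tree such that the set Chi(u) of children of u is countably infinite for every u ∈ V. Then for each θ ∈ (0, ∞) and each u ∈ V there exists a family {λ_v}_{v∈Des(u)} of positive real numbers such that λ_u² = θ and (Σ_{w∈Chi(v)} λ_w²) · λ_v² = 1 for every v ∈ Des(u). -/

import Mathlib

open scoped ENNReal NNReal Classical

noncomputable section

/-- A directed tree: a directed graph with nonempty vertex set in which each vertex has
at most one parent, there are no circuits, and the underlying undirected graph is
connected and has no cycles (i.e. is a tree). -/
structure DirectedTree (V : Type) where
  edge : V → V → Prop
  nonempty : Nonempty V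
  antisymm : ∀ u v : V, edge u v → ¬ edge v u
  parent_unique : ∀ u v w : V, edge u w → edge v w → u = v
  isTree : (SimpleGraph.fromRel edge).IsTree

namespace DirectedTree

variable {V : Type} (T : DirectedTree V)

/-- The set of children of a vertex. -/
def chi (u : V) : Set V := {v | T.edge u v}

/-- `v` has a parent. -/
def HasParent (v : V) : Prop := ∃ u, T.edge u v

/-- `V⁰`: the set of non-root vertices, i.e. the vertices possessing a parent. -/
def Vcirc : Set V := {v | T.HasParent v}

/-- The tree is leafless if every vertex has a child. -/
def Leafless : Prop := ∀ u : V, (T.chi u).Nonempty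

/-- The parent of a vertex (junk value if the vertex is a root). -/
def par (v : V) : V := if h : T.HasParent v then h.choose else T.nonempty.some

/-- The set of descendants of a vertex. -/
def desc (u : V) : Set V := {w | Relation.ReflTransGen T.edge u w}

/-- The formal weighted shift map `Λ_T` acting on all complex functions on `V`. -/
def Lam (lam : V → ℂ) (f : V → ℂ) : V → ℂ :=
  fun v => if T.HasParent v then lam v * f (T.par v) else 0

/-- The domain of the weighted shift `S_λ`. -/
def domain (lam : V → ℂ) : Set (lp (fun _ : V => ℂ) 2) :=
  {f | Memℓp (T.Lam lam ⇑f) 2}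

/-- The weighted shift `S_λ` (extended by `0` outside its domain). -/
def shift (lam : V → ℂ) (f : lp (fun _ : V => ℂ) 2) : lp (fun _ : V => ℂ) 2 :=
  if h : f ∈ T.domain lam then (⟨T.Lam lam ⇑f, h⟩ : lp (fun _ : V => ℂ) 2) else 0

/-- The domain of `S_λ²`. -/
def squareDomain (lam : V → ℂ) : Set (lp (fun _ : V => ℂ) 2) :=
  {f | f ∈ T.domain lam ∧ T.shift lam f ∈ T.domain lam}

/-- The domain of the adjoint `S_λ*`. -/
def adjDomain (lam : V → ℂ) : Set (lp (fun _ : V => ℂ) 2) :=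
  {g | ∃ h : lp (fun _ : V => ℂ) 2,
    ∀ f ∈ T.domain lam, (inner ℂ (T.shift lam f) g : ℂ) = inner ℂ f h}

/-- `S_λ` is hyponormal: it is densely defined, `D(S_λ) ⊆ D(S_λ*)` and
`‖S_λ* f‖ ≤ ‖S_λ f‖` for every `f ∈ D(S_λ)` (the adjoint value at `f` being any vector
`h` satisfying `⟪S_λ g, f⟫ = ⟪g, h⟫` for all `g ∈ D(S_λ)`; it is unique by density). -/
def IsHyponormal (lam : V → ℂ) : Prop :=
  Dense (T.domain lam) ∧ T.domain lam ⊆ T.adjDomain lam ∧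
    ∀ f ∈ T.domain lam, ∀ h : lp (fun _ : V => ℂ) 2,
      (∀ g ∈ T.domain lam, (inner ℂ (T.shift lam g) f : ℂ) = inner ℂ g h) →
        ‖h‖ ≤ ‖T.shift lam f‖

/-- `ζ_u = (Σ_{v ∈ Chi(u)} |λ_v|²)^{1/2} ∈ [0,∞]`. -/
def zeta (lam : V → ℂ) (u : V) : ℝ≥0∞ :=
  (∑' v : T.chi u, ((‖lam (v : V)‖₊ : ℝ≥0∞)) ^ 2) ^ (1/2 : ℝ)

end DirectedTree

/-! Fix positive weights `c` with `∑_{w ∈ Chi(v)} c_w = 1` for every `v` (possible since each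
`Chi(v)` is countably infinite, e.g. a geometric series). Going down from `u` by depth, put
`μ_u = θ` and `μ_w = c_w / μ_v` for a child `w` of `v`; then `λ = √μ` works, because
`(∑_{w ∈ Chi(v)} μ_w) μ_v = ∑_{w ∈ Chi(v)} c_w = 1`. The depth is well defined since the
tree has no directed cycles. -/

open Relation

theorem exists_pos_hasSum_eq_one (ι : Type*) [Countable ι] [Infinite ι] :
    ∃ c : ι → ℝ, (∀ i, 0 < c i) ∧ HasSum c 1 := by
  obtain ⟨e⟩ : Nonempty (ι ≃ ℕ) := nonempty_equiv_of_countable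
  exact ⟨fun i => 1 / 2 / 2 ^ e i, fun _ => by positivity,
    e.hasSum_iff.2 (hasSum_geometric_two' 1)⟩

namespace DirectedTree

variable {V : Type} (T : DirectedTree V)

theorem edge_par {v : V} (hv : T.HasParent v) : T.edge (T.par v) v := by
  rw [par, dif_pos hv]
  exact hv.choose_spec

theorem par_eq_of_edge {x v : V} (h : T.edge x v) : T.par v = x :=
  T.parent_unique _ _ _ (T.edge_par ⟨x, h⟩) h

/-- The edge `b → a` is a bridge of the underlying tree, so this rules out directed cycles. -/
theorem reachable_deleteEdges_of_reflTransGen {a b : V} (hba : T.edge b a) {y : V}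
    (hay : ReflTransGen T.edge a y) :
    ((SimpleGraph.fromRel T.edge).deleteEdges {s(b, a)}).Reachable a y := by
  induction hay with
  | refl => rfl
  | @tail x y _ hxy ih =>
    by_cases hy : y = a
    · subst hy; rfl
    refine ih.trans (SimpleGraph.Adj.reachable ?_)
    have hxy_ne : x ≠ y := by
      rintro rfl
      exact T.antisymm x x hxy hxy
    refine ⟨(SimpleGraph.fromRel_adj _ _ _).2 ⟨hxy_ne, Or.inl hxy⟩, ?_⟩
    rw [SimpleGraph.fromEdgeSet_adj, Set.mem_singleton_iff, Sym2.eq_iff]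
    rintro ⟨⟨rfl, rfl⟩ | ⟨rfl, rfl⟩, -⟩
    · exact hy rfl
    · exact T.antisymm _ _ hba hxy

theorem not_edge_of_mem_desc {u v : V} (hv : v ∈ T.desc u) : ¬ T.edge v u := by
  intro hvu
  have hadj : (SimpleGraph.fromRel T.edge).Adj v u :=
    (SimpleGraph.fromRel_adj _ _ _).2 ⟨fun h => T.antisymm v v (h ▸ hvu) (h ▸ hvu), Or.inl hvu⟩
  have hbridge := SimpleGraph.isAcyclic_iff_forall_adj_isBridge.mp T.isTree.isAcyclic hadj
  exact SimpleGraph.isBridge_iff.mp hbridge (T.reachable_deleteEdges_of_reflTransGen hvu hv).symm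

theorem exists_iterate_par_eq_of_mem_desc {u v : V} (hv : v ∈ T.desc u) :
    ∃ n, T.par^[n] v = u := by
  induction hv with
  | refl => exact ⟨0, rfl⟩
  | @tail x y _ hxy ih =>
    obtain ⟨n, hn⟩ := ih
    exact ⟨n + 1, by rw [Function.iterate_succ_apply, T.par_eq_of_edge hxy, hn]⟩

/-- The depth of `v` below `u` (junk value `0` if `v` is not a descendant of `u`). -/
def depth (u v : V) : ℕ :=
  if h : ∃ n, T.par^[n] v = u then Nat.find h else 0

theorem depth_self (u : V) : T.depth u u = 0 := by
  have hex : ∃ n, T.par^[n] u = u := ⟨0, rfl⟩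
  rw [depth, dif_pos hex, Nat.find_eq_zero]
  rfl

theorem iterate_par_depth {u v : V} (hv : v ∈ T.desc u) : T.par^[T.depth u v] v = u := by
  have hex := T.exists_iterate_par_eq_of_mem_desc hv
  rw [depth, dif_pos hex]
  exact Nat.find_spec hex

theorem depth_of_edge {u v w : V} (hv : v ∈ T.desc u) (hvw : T.edge v w) :
    T.depth u w = T.depth u v + 1 := by
  have hpw := T.par_eq_of_edge hvw
  have hw_iter : T.par^[T.depth u v + 1] w = u := by
    rw [Function.iterate_succ_apply, hpw, T.iterate_par_depth hv]
  have hw : w ∈ T.desc u := ReflTransGen.tail hv hvw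
  refine le_antisymm ?_ ?_
  · rw [depth, dif_pos ⟨_, hw_iter⟩]
    exact Nat.find_le hw_iter
  · have hw_depth := T.iterate_par_depth hw
    rcases h : T.depth u w with _ | k
    · rw [h, Function.iterate_zero_apply] at hw_depth
      exact absurd (hw_depth ▸ hvw) (T.not_edge_of_mem_desc hv)
    · rw [h, Function.iterate_succ_apply, hpw] at hw_depth
      have hex := T.exists_iterate_par_eq_of_mem_desc hv
      have : T.depth u v ≤ k := by
        rw [depth, dif_pos hex]
        exact Nat.find_le hw_depth
      omega

def pathWeight (c : V → ℝ) (θ : ℝ) : ℕ → V → ℝ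
  | 0, _ => θ
  | n + 1, v => c v / pathWeight c θ n (T.par v)

theorem pathWeight_pos {c : V → ℝ} (hc : ∀ v, 0 < c v) {θ : ℝ} (hθ : 0 < θ) :
    ∀ n v, 0 < T.pathWeight c θ n v
  | 0, _ => hθ
  | n + 1, v => div_pos (hc v) (pathWeight_pos hc hθ n (T.par v))

theorem exists_pos_mul_parent_eq {c : V → ℝ} (hc : ∀ v, 0 < c v) {θ : ℝ} (hθ : 0 < θ)
    (u : V) :
    ∃ μ : V → ℝ, (∀ v, 0 < μ v) ∧ μ u = θ ∧
      ∀ v ∈ T.desc u, ∀ w ∈ T.chi v, μ w * μ v = c w := by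
  refine ⟨fun v => T.pathWeight c θ (T.depth u v) v, fun v => T.pathWeight_pos hc hθ _ v,
    by simp only [depth_self, pathWeight], fun v hv w hvw => ?_⟩
  simp only [T.depth_of_edge hv hvw, pathWeight, T.par_eq_of_edge hvw]
  exact div_mul_cancel₀ _ (T.pathWeight_pos hc hθ _ v).ne'

theorem exists_pos_hasSum_chi_eq_one (h : ∀ u : V, (T.chi u).Countable ∧ (T.chi u).Infinite) :
    ∃ c : V → ℝ, (∀ v, 0 < c v) ∧ ∀ v, HasSum (fun w : T.chi v => c w) 1 := by
  have : ∀ v, ∃ c : T.chi v → ℝ, (∀ i, 0 < c i) ∧ HasSum c 1 := fun v =>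
    have := (h v).1.to_subtype
    have := (h v).2.to_subtype
    exists_pos_hasSum_eq_one _
  choose c hc_pos hc_sum using this
  let glued : V → ℝ := fun w => if hw : T.HasParent w then c (T.par w) ⟨w, T.edge_par hw⟩ else 1
  have glued_eq : ∀ v (w : T.chi v), glued w = c v w := by
    rintro v ⟨w, hvw⟩
    obtain rfl := T.par_eq_of_edge hvw
    exact dif_pos ⟨_, hvw⟩
  refine ⟨glued, fun w => ?_, fun v => ?_⟩
  · by_cases hw : T.HasParent w
    · simpa only [glued, dif_pos hw] using hc_pos _ _
    · simp only [glued, dif_neg hw, zero_lt_one]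
  · simpa only [glued_eq] using hc_sum v

end DirectedTree

/-- (‡): if every vertex has countably infinitely many children, then for each
`θ ∈ (0,∞)` and `u ∈ V` there is a family of positive reals `{λ_v}_{v∈Des(u)}`
with `λ_u² = θ` and `(Σ_{w∈Chi(v)} λ_w²) λ_v² = 1` for every `v ∈ Des(u)`. -/
theorem stmt10 {V : Type} (T : DirectedTree V)
    (h : ∀ u : V, (T.chi u).Countable ∧ (T.chi u).Infinite)
    (θ : ℝ) (hθ : 0 < θ) (u : V) :
    ∃ lam : V → ℝ, (∀ v ∈ T.desc u, 0 < lam v) ∧ lam u ^ 2 = θ ∧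
      ∀ v ∈ T.desc u, Summable (fun w : T.chi v => lam (w:V) ^ 2) ∧
        (∑' w : T.chi v, lam (w:V) ^ 2) * lam v ^ 2 = 1 := by
  obtain ⟨c, hc_pos, hc_sum⟩ := T.exists_pos_hasSum_chi_eq_one h
  obtain ⟨μ, hμ_pos, hμ_u, hμ_mul⟩ := T.exists_pos_mul_parent_eq hc_pos hθ u
  have hsq : ∀ v, √(μ v) ^ 2 = μ v := fun v => Real.sq_sqrt (hμ_pos v).le
  refine ⟨fun v => √(μ v), fun v _ => Real.sqrt_pos.2 (hμ_pos v), by rw [hsq, hμ_u],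
    fun v hv => ?_⟩
  have hsum : HasSum (fun w : T.chi v => √(μ w) ^ 2) (1 / μ v) := by
    simp only [hsq]
    refine ((hc_sum v).div_const (μ v)).congr_fun fun w => ?_
    rw [← hμ_mul v hv w w.2, mul_div_cancel_right₀ _ (hμ_pos v).ne']
  exact ⟨hsum.summable, by rw [hsum.tsum_eq, hsq, one_div_mul_cancel (hμ_pos v).ne']⟩
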